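/- Let X be a Banach space and K, L ⊆ X* nonempty w*-compact sets. Then Sz(K ∪ L) = max{Sz(K), Sz(L)}. -/

import Mathlib

open NormedSpace

noncomputable def derivIter {α : Type*} (d : Set α → Set α) (K : Set α) : Ordinal → Set α :=
  fun ξ => Ordinal.limitRecOn ξ K (fun _ ih => d ih)
    (fun o _ ih => ⋂ ζ : Set.Iio o, ih ζ.1 ζ.2)

/-- The Szlenk slicing derivation: `s_ε(K)` removes from `K` every point contained in
a `w*`-open set whose intersection with `K` has norm diameter at most `ε`. -/
def szSlice {X : Type*} [NormedAddCommGroup X] [NormedSpace ℝ X] (ε : ℝ)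
    (K : Set (StrongDual ℝ X)) : Set (StrongDual ℝ X) :=
  {f ∈ K | ∀ W : Set (WeakDual ℝ X), IsOpen W → StrongDual.toWeakDual f ∈ W →
    ε < Metric.diam (K ∩ (fun g => StrongDual.toWeakDual g) ⁻¹' W)}

/-!
`Sz(K) ≤ Sz(K ∪ L)` because the slicing derivation is monotone on norm-bounded sets.
Conversely, transfinite induction gives `s^ξ_ε(K ∪ L) ⊆ s^ξ_{ε/2}(K) ∪ s^ξ_{ε/2}(L)`:
if `f` survives neither `ε/2`-slicing, some `w*`-neighbourhood of `f` meets `K` and `L` only in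
points within `ε/2` of `f`, so it meets `K ∪ L` in a set of diameter at most `ε`; at limit
stages the inclusion persists because the iterates decrease. Boundedness of `w*`-compact sets
(uniform boundedness) matters since `Metric.diam` is `0` on unbounded sets.
-/

section DerivIter

universe u

variable {α : Type*} (d : Set α → Set α) (K : Set α)

theorem derivIter_zero : derivIter d K 0 = K :=
  Ordinal.limitRecOn_zero _ _ _

theorem derivIter_add_one (o : Ordinal) : derivIter d K (o + 1) = d (derivIter d K o) :=
  Ordinal.limitRecOn_add_one _ _ _ _

theorem derivIter_limit {o : Ordinal} (ho : Order.IsSuccLimit o) :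
    derivIter d K o = ⋂ ζ : Set.Iio o, derivIter d K ζ :=
  Ordinal.limitRecOn_limit _ _ _ _ ho

variable {d}

theorem derivIter_antitone (hd : ∀ A, d A ⊆ A) : Antitone (derivIter d K) := by
  intro ζ ξ hζξ
  induction ξ using Ordinal.limitRecOn generalizing ζ with
  | zero => rw [nonpos_iff_eq_zero.mp hζξ]
  | add_one o ih =>
    rcases hζξ.lt_or_eq with h | rfl
    · rw [derivIter_add_one]
      exact (hd _).trans (ih (Order.lt_add_one_iff.mp h))
    · exact le_rfl
  | limit o ho _ =>
    rcases hζξ.lt_or_eq with h | rfl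
    · rw [derivIter_limit d K ho]
      exact Set.iInter_subset_of_subset ⟨ζ, h⟩ subset_rfl
    · exact le_rfl

theorem derivIter_subset (hd : ∀ A, d A ⊆ A) (ξ : Ordinal) : derivIter d K ξ ⊆ K := by
  simpa only [derivIter_zero] using derivIter_antitone K hd (zero_le (a := ξ))

theorem derivIter_induction {P : Set α → Prop} (hK : P K) (hd : ∀ A, P A → P (d A))
    (hInter : ∀ S : Set (Set α), (∀ A ∈ S, P A) → P (⋂₀ S)) (ξ : Ordinal) :
    P (derivIter d K ξ) := by
  induction ξ using Ordinal.limitRecOn with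
  | zero => rwa [derivIter_zero]
  | add_one o ih => rw [derivIter_add_one]; exact hd _ ih
  | limit o ho ih =>
    rw [derivIter_limit d K ho, ← Set.sInter_range]
    exact hInter _ (Set.forall_mem_range.mpr fun ζ => ih ζ ζ.2)

theorem derivIter_mono {P : Set α → Prop} (hd : ∀ {A B}, A ⊆ B → P B → d A ⊆ d B)
    {A B : Set α} (hB : ∀ ξ : Ordinal.{u}, P (derivIter d B ξ)) (hAB : A ⊆ B)
    (ξ : Ordinal.{u}) :
    derivIter d A ξ ⊆ derivIter d B ξ := by
  induction ξ using Ordinal.limitRecOn with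
  | zero => rwa [derivIter_zero, derivIter_zero]
  | add_one o ih =>
    rw [derivIter_add_one, derivIter_add_one]
    exact hd ih (hB o)
  | limit o ho ih =>
    rw [derivIter_limit d A ho, derivIter_limit d B ho]
    exact Set.iInter_mono fun ζ => ih ζ ζ.2

theorem derivIter_union_subset {e : Set α → Set α} (he : ∀ A, e A ⊆ A) {P : Set α → Prop}
    (hde : ∀ {C A B}, C ⊆ A ∪ B → P A → P B → d C ⊆ e A ∪ e B)
    {A B : Set α} (hA : ∀ ξ : Ordinal.{u}, P (derivIter e A ξ))
    (hB : ∀ ξ : Ordinal.{u}, P (derivIter e B ξ)) (ξ : Ordinal.{u}) :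
    derivIter d (A ∪ B) ξ ⊆ derivIter e A ξ ∪ derivIter e B ξ := by
  induction ξ using Ordinal.limitRecOn with
  | zero => simp only [derivIter_zero, subset_rfl]
  | add_one o ih =>
    simp only [derivIter_add_one]
    exact hde ih (hA o) (hB o)
  | limit o ho ih =>
    simp only [derivIter_limit _ _ ho]
    intro x hx
    by_contra hxAB
    simp only [Set.mem_union, Set.mem_iInter, not_or, not_forall] at hxAB
    obtain ⟨⟨⟨ζA, hζA⟩, hxA⟩, ⟨⟨ζB, hζB⟩, hxB⟩⟩ := hxAB
    have hζ : max ζA ζB < o := max_lt hζA hζB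
    rcases ih _ hζ (Set.mem_iInter.mp hx ⟨_, hζ⟩) with h | h
    · exact hxA (derivIter_antitone A he (le_max_left _ _) h)
    · exact hxB (derivIter_antitone B he (le_max_right _ _) h)

end DerivIter

section Slicing

open StrongDual Bornology

variable {X : Type*} [NormedAddCommGroup X] [NormedSpace ℝ X]

theorem isBounded_of_isCompact_image_toWeakDual [CompleteSpace X] {K : Set (StrongDual ℝ X)}
    (hK : IsCompact (toWeakDual '' K)) : IsBounded K := by
  have := WeakDual.isBounded_iff_isVonNBounded.mpr (hK.isVonNBounded ℝ)
  rwa [← WeakDual.isBounded_toWeakDual_preimage_iff_isBounded,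
    toWeakDual.injective.preimage_image] at this

theorem isClosed_image_toWeakDual_sInter {S : Set (Set (StrongDual ℝ X))}
    (hS : ∀ A ∈ S, IsClosed (toWeakDual '' A)) : IsClosed (toWeakDual '' ⋂₀ S) := by
  rw [Set.sInter_eq_iInter, Set.image_iInter toWeakDual.bijective]
  exact isClosed_iInter fun A => hS A A.2

theorem szSlice_subset (ε : ℝ) (K : Set (StrongDual ℝ X)) : szSlice ε K ⊆ K :=
  fun _ hf => hf.1

theorem szSlice_eq_inter_preimage_compl (ε : ℝ) (K : Set (StrongDual ℝ X)) :
    szSlice ε K = K ∩ toWeakDual ⁻¹' (⋃₀ {W : Set (WeakDual ℝ X) |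
      IsOpen W ∧ Metric.diam (K ∩ toWeakDual ⁻¹' W) ≤ ε})ᶜ := by
  ext f
  simp only [szSlice, Set.mem_sep_iff, Set.mem_inter_iff, Set.mem_preimage, Set.mem_compl_iff,
    Set.mem_sUnion, not_exists, not_and]
  exact and_congr_right fun _ => forall_congr' fun W =>
    ⟨fun h hW hfW => (h hW.1 hfW).not_ge hW.2,
      fun h hW hfW => lt_of_not_ge fun hle => h ⟨hW, hle⟩ hfW⟩

theorem isClosed_image_szSlice (ε : ℝ) {K : Set (StrongDual ℝ X)}
    (hK : IsClosed (toWeakDual '' K)) : IsClosed (toWeakDual '' szSlice ε K) := by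
  rw [szSlice_eq_inter_preimage_compl, Set.image_inter_preimage]
  exact hK.inter (isOpen_sUnion fun W hW => hW.1).isClosed_compl

theorem isClosed_image_derivIter_szSlice (ε : ℝ) {K : Set (StrongDual ℝ X)}
    (hK : IsClosed (toWeakDual '' K)) (ξ : Ordinal) :
    IsClosed (toWeakDual '' derivIter (szSlice ε) K ξ) :=
  derivIter_induction K hK (fun _ => isClosed_image_szSlice ε)
    (fun _ => isClosed_image_toWeakDual_sInter) ξ

theorem szSlice_mono {ε : ℝ} {A B : Set (StrongDual ℝ X)} (hAB : A ⊆ B) (hB : IsBounded B) :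
    szSlice ε A ⊆ szSlice ε B := fun _ ⟨hfA, hf⟩ =>
  ⟨hAB hfA, fun W hW hfW => (hf W hW hfW).trans_le <|
    Metric.diam_mono (Set.inter_subset_inter_left _ hAB) (hB.subset Set.inter_subset_left)⟩

theorem exists_isOpen_forall_dist_le_of_notMem_szSlice {ε : ℝ} {K : Set (StrongDual ℝ X)}
    (hKc : IsClosed (toWeakDual '' K)) (hKb : IsBounded K) {f : StrongDual ℝ X}
    (hf : f ∉ szSlice ε K) :
    ∃ W : Set (WeakDual ℝ X), IsOpen W ∧ toWeakDual f ∈ W ∧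
      ∀ g ∈ K, toWeakDual g ∈ W → dist g f ≤ ε := by
  by_cases hfK : f ∈ K
  · simp only [szSlice, Set.mem_sep_iff, hfK, true_and, not_forall, not_lt] at hf
    obtain ⟨W, hW, hfW, hdiam⟩ := hf
    exact ⟨W, hW, hfW, fun g hg hgW => (Metric.dist_le_diam_of_mem
      (hKb.subset Set.inter_subset_left) ⟨hg, hgW⟩ ⟨hfK, hfW⟩).trans hdiam⟩
  · refine ⟨(toWeakDual '' K)ᶜ, hKc.isOpen_compl, ?_,
      fun g hg hgW => (hgW ⟨g, hg, rfl⟩).elim⟩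
    rwa [Set.mem_compl_iff, toWeakDual.injective.mem_set_image]

theorem szSlice_subset_union {ε : ℝ} (hε : 0 ≤ ε) {A B C : Set (StrongDual ℝ X)}
    (hC : C ⊆ A ∪ B) (hAc : IsClosed (toWeakDual '' A)) (hBc : IsClosed (toWeakDual '' B))
    (hAb : IsBounded A) (hBb : IsBounded B) :
    szSlice ε C ⊆ szSlice (ε / 2) A ∪ szSlice (ε / 2) B := by
  rintro f ⟨-, hf⟩
  by_contra hfAB
  rw [Set.mem_union, not_or] at hfAB
  obtain ⟨WA, hWA, hfWA, hdistA⟩ :=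
    exists_isOpen_forall_dist_le_of_notMem_szSlice hAc hAb hfAB.1
  obtain ⟨WB, hWB, hfWB, hdistB⟩ :=
    exists_isOpen_forall_dist_le_of_notMem_szSlice hBc hBb hfAB.2
  have hclose : ∀ g ∈ C ∩ toWeakDual ⁻¹' (WA ∩ WB), dist g f ≤ ε / 2 := by
    rintro g ⟨hg, hgWA, hgWB⟩
    rcases hC hg with hg | hg
    exacts [hdistA g hg hgWA, hdistB g hg hgWB]
  refine (hf _ (hWA.inter hWB) ⟨hfWA, hfWB⟩).not_ge <| Metric.diam_le_of_forall_dist_le hε ?_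
  intro g hg h hh
  calc dist g h ≤ dist g f + dist h f := dist_triangle_right g h f
    _ ≤ ε / 2 + ε / 2 := add_le_add (hclose g hg) (hclose h hh)
    _ = ε := add_halves ε

theorem derivIter_szSlice_mono {ε : ℝ} {A B : Set (StrongDual ℝ X)} (hB : IsBounded B)
    (hAB : A ⊆ B) (ξ : Ordinal) : derivIter (szSlice ε) A ξ ⊆ derivIter (szSlice ε) B ξ :=
  derivIter_mono szSlice_mono (fun ζ => hB.subset (derivIter_subset B (szSlice_subset ε) ζ))
    hAB ξ

theorem derivIter_szSlice_union_subset {ε : ℝ} (hε : 0 ≤ ε) {A B : Set (StrongDual ℝ X)}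
    (hAc : IsClosed (toWeakDual '' A)) (hBc : IsClosed (toWeakDual '' B))
    (hAb : IsBounded A) (hBb : IsBounded B) (ξ : Ordinal) :
    derivIter (szSlice ε) (A ∪ B) ξ ⊆
      derivIter (szSlice (ε / 2)) A ξ ∪ derivIter (szSlice (ε / 2)) B ξ :=
  derivIter_union_subset (szSlice_subset (ε / 2))
    (P := fun S => IsClosed (toWeakDual '' S) ∧ IsBounded S)
    (fun hC hA hB => szSlice_subset_union hε hC hA.1 hB.1 hA.2 hB.2)
    (fun ζ => ⟨isClosed_image_derivIter_szSlice _ hAc ζ,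
      hAb.subset (derivIter_subset A (szSlice_subset _) ζ)⟩)
    (fun ζ => ⟨isClosed_image_derivIter_szSlice _ hBc ζ,
      hBb.subset (derivIter_subset B (szSlice_subset _) ζ)⟩) ξ

end Slicing

theorem szlenk_union_general {X : Type*} [NormedAddCommGroup X] [NormedSpace ℝ X]
    [CompleteSpace X] (K L : Set (StrongDual ℝ X))
    (hKc : IsCompact ((fun f => StrongDual.toWeakDual f) '' K))
    (hLc : IsCompact ((fun f => StrongDual.toWeakDual f) '' L)) :
    ∀ ξ : Ordinal,
      (∃ ε : ℝ, 0 < ε ∧ (derivIter (szSlice ε) (K ∪ L) ξ).Nonempty) ↔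
        ((∃ ε : ℝ, 0 < ε ∧ (derivIter (szSlice ε) K ξ).Nonempty) ∨
          (∃ ε : ℝ, 0 < ε ∧ (derivIter (szSlice ε) L ξ).Nonempty)) := by
  intro ξ
  have hKb := isBounded_of_isCompact_image_toWeakDual hKc
  have hLb := isBounded_of_isCompact_image_toWeakDual hLc
  have hKLb := hKb.union hLb
  constructor
  · rintro ⟨ε, hε, x, hx⟩
    rcases derivIter_szSlice_union_subset hε.le hKc.isClosed hLc.isClosed hKb hLb ξ hx
      with h | h
    exacts [Or.inl ⟨ε / 2, half_pos hε, x, h⟩, Or.inr ⟨ε / 2, half_pos hε, x, h⟩]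
  · rintro (⟨ε, hε, hK⟩ | ⟨ε, hε, hL⟩)
    exacts [⟨ε, hε, hK.mono (derivIter_szSlice_mono hKLb Set.subset_union_left ξ)⟩,
      ⟨ε, hε, hL.mono (derivIter_szSlice_mono hKLb Set.subset_union_right ξ)⟩]

/-- `Sz(K ∪ L) = max (Sz K) (Sz L)`, expressed via: for every ordinal `ξ`,
`Sz(K ∪ L) > ξ` iff `Sz K > ξ` or `Sz L > ξ`. -/
theorem szlenk_union {X : Type*} [NormedAddCommGroup X] [NormedSpace ℝ X]
    [CompleteSpace X] (K L : Set (StrongDual ℝ X)) (hK : K.Nonempty) (hL : L.Nonempty)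
    (hKc : IsCompact ((fun f => StrongDual.toWeakDual f) '' K))
    (hLc : IsCompact ((fun f => StrongDual.toWeakDual f) '' L)) :
    ∀ ξ : Ordinal,
      (∃ ε : ℝ, 0 < ε ∧ (derivIter (szSlice ε) (K ∪ L) ξ).Nonempty) ↔
        ((∃ ε : ℝ, 0 < ε ∧ (derivIter (szSlice ε) K ξ).Nonempty) ∨
          (∃ ε : ℝ, 0 < ε ∧ (derivIter (szSlice ε) L ξ).Nonempty)) :=
  szlenk_union_general K L hKc hLc
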